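/- Let λ > 0, let φ ∈ P^r satisfy φ' − λ φ − L̂(φ(t₁)) = L(1) on I, and write φ = Σ_{i=0}^r a_i K_i in the rescaled Legendre basis. Then: a_0 = −(1 + φ(t₀))/(kλ); if r ≥ 1 then a_1 = −(3/λ)(2/k + λ) a_0; a_i = (2i+1)( a_{i−2}/(2i−3) − 2 a_{i−1}/(kλ) ) for all 2 ≤ i ≤ r; and moreover a_i ≠ 0 with sign(a_i) = (−1)^{i+1} for all 0 ≤ i ≤ r. -/

import Mathlib

open Polynomial MeasureTheory intervalIntegral

/-- The rescaled Legendre polynomials on `[t₀, t₁]`: `K i` has degree `i`,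
`K i (t₁) = 1`, `K i (t₀) = (-1)^i`, and they are `L²(t₀,t₁)`-orthogonal with
`∫ K i ^ 2 = (t₁ - t₀)/(2 i + 1)`. -/
def IsLegendreBasis (t₀ t₁ : ℝ) (K : ℕ → Polynomial ℝ) : Prop :=
  (∀ i, (K i).natDegree = i) ∧ (∀ i, (K i).eval t₁ = 1) ∧
  (∀ i, (K i).eval t₀ = (-1 : ℝ) ^ i) ∧
  (∀ i j, (∫ t in t₀..t₁, (K i).eval t * (K j).eval t) =
    if i = j then (t₁ - t₀) / (2 * (i : ℝ) + 1) else 0)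

/-- The lifting operator `L(z) = (z/k) ∑_{i=0}^r (-1)^i (2i+1) K_i`. -/
noncomputable def Lop (t₀ t₁ : ℝ) (r : ℕ) (K : ℕ → Polynomial ℝ) (z : ℝ) : Polynomial ℝ :=
  Polynomial.C (z / (t₁ - t₀)) *
    ∑ i ∈ Finset.range (r + 1), Polynomial.C ((-1 : ℝ) ^ i * (2 * (i : ℝ) + 1)) * K i

/-- The endpoint lifting operator `L̂(z) = (z/k) ∑_{i=0}^r (2i+1) K_i`. -/
noncomputable def LopE (t₀ t₁ : ℝ) (r : ℕ) (K : ℕ → Polynomial ℝ) (z : ℝ) : Polynomial ℝ :=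
  Polynomial.C (z / (t₁ - t₀)) *
    ∑ i ∈ Finset.range (r + 1), Polynomial.C (2 * (i : ℝ) + 1) * K i

/-- The scalar dG operator `Γ_λ(v) = v' + L(v(t₀)) + λ v`. -/
noncomputable def Gam (t₀ t₁ : ℝ) (r : ℕ) (K : ℕ → Polynomial ℝ) (lam : ℝ)
    (v : Polynomial ℝ) : Polynomial ℝ :=
  Polynomial.derivative v + Lop t₀ t₁ r K (v.eval t₀) + Polynomial.C lam * v

/-!
Testing the equation against `K_j` turns it, by orthogonality and the lifting identities, into a
linear system for the `a_i`; the only non-diagonal term is `∫ K_i' K_j`, which integration by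
parts evaluates to `1 - (-1)^(i+j)` for `j < i` and to `0` otherwise. Adding the equations for `j`
and `j + 1` gives `kλ (a_j/(2j+1) + a_(j+1)/(2j+3)) = -2 (a_0 + ⋯ + a_j)`, and differences of these
are the three-term recursion. In the variables `(-1)^(i+1) a_i/(2i+1)` that recursion has positive
coefficients, so they are `-a_0` times a positive sequence `γ_i`; the last equation of the system
then reads `-a_0 · (kλ/2)(γ_r + γ_(r+1)) = 1`, which forces `-a_0 > 0`.
-/

open Finset

noncomputable def polyIntegral (a b : ℝ) : ℝ[X] →ₗ[ℝ] ℝ where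
  toFun p := ∫ t in a..b, p.eval t
  map_add' p q := by
    simpa using integral_add (p.continuous.intervalIntegrable a b)
      (q.continuous.intervalIntegrable a b)
  map_smul' c p := by simp

theorem polyIntegral_apply (a b : ℝ) (p : ℝ[X]) :
    polyIntegral a b p = ∫ t in a..b, p.eval t := rfl

theorem polyIntegral_C_mul (a b c : ℝ) (p : ℝ[X]) :
    polyIntegral a b (C c * p) = c * polyIntegral a b p := by
  rw [C_mul', map_smul, smul_eq_mul]

theorem polyIntegral_derivative (a b : ℝ) (p : ℝ[X]) :
    polyIntegral a b (derivative p) = p.eval b - p.eval a :=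
  integral_eq_sub_of_hasDerivAt (fun x _ ↦ p.hasDerivAt x)
    ((derivative p).continuous.intervalIntegrable a b)

def derivPairing (i j : ℕ) : ℝ := if j < i then 1 - (-1) ^ (i + j) else 0

theorem derivPairing_of_le {i j : ℕ} (h : i ≤ j) : derivPairing i j = 0 :=
  if_neg (not_lt.mpr h)

theorem derivPairing_zero_right (i : ℕ) : derivPairing i 0 = 1 - (-1) ^ i := by
  rcases i.eq_zero_or_pos with rfl | hi
  · simp [derivPairing]
  · simp [derivPairing, hi]

theorem derivPairing_add_derivPairing_succ (i j : ℕ) :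
    derivPairing i j + derivPairing i (j + 1) = if j < i then 2 else 0 := by
  unfold derivPairing
  split_ifs with h₁ h₂
  · rw [← add_assoc, pow_succ]; ring
  · rw [show i + j = 2 * j + 1 by omega, (odd_two_mul_add_one j).neg_one_pow]; norm_num
  · omega
  · simp

-- The dual equation tested against `K_j` for `j ≤ r`, with `c = kλ`.
def DualSystem (c : ℝ) (r : ℕ) (a : ℕ → ℝ) : Prop :=
  ∀ j ≤ r, ∑ i ∈ range (r + 1), a i * derivPairing i j - c * (a j / (2 * j + 1))
    - ∑ i ∈ range (r + 1), a i = (-1) ^ j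

namespace IsLegendreBasis

variable {t₀ t₁ : ℝ} {K : ℕ → ℝ[X]}

theorem natDegree_eq (hK : IsLegendreBasis t₀ t₁ K) (i : ℕ) : (K i).natDegree = i := hK.1 i

theorem eval_right (hK : IsLegendreBasis t₀ t₁ K) (i : ℕ) : (K i).eval t₁ = 1 := hK.2.1 i

theorem eval_left (hK : IsLegendreBasis t₀ t₁ K) (i : ℕ) : (K i).eval t₀ = (-1) ^ i := hK.2.2.1 i

theorem polyIntegral_mul (hK : IsLegendreBasis t₀ t₁ K) (i j : ℕ) :
    polyIntegral t₀ t₁ (K i * K j) = if i = j then (t₁ - t₀) / (2 * (i : ℝ) + 1) else 0 := by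
  simpa [polyIntegral_apply] using hK.2.2.2 i j

theorem ne_zero (hK : IsLegendreBasis t₀ t₁ K) (i : ℕ) : K i ≠ 0 := by
  intro h
  simpa [h] using hK.eval_right i

def toSequence (hK : IsLegendreBasis t₀ t₁ K) : Polynomial.Sequence ℝ where
  elems' := K
  degree_eq' i := by rw [degree_eq_natDegree (hK.ne_zero i), hK.natDegree_eq]

theorem degree_eq (hK : IsLegendreBasis t₀ t₁ K) (i : ℕ) : (K i).degree = i :=
  hK.toSequence.degree_eq i

theorem polyIntegral_mul_eq_zero_of_degree_lt (hK : IsLegendreBasis t₀ t₁ K) {p : ℝ[X]}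
    {j : ℕ} (hp : p.degree < j) : polyIntegral t₀ t₁ (p * K j) = 0 := by
  have hspan := hK.toSequence.span_degreeLT (m := j) fun i _ ↦
    (leadingCoeff_ne_zero.mpr (hK.ne_zero i)).isUnit
  suffices p ∈ LinearMap.ker ((polyIntegral t₀ t₁).comp (LinearMap.mulRight ℝ (K j))) from this
  refine (Submodule.span_le.mpr ?_) (hspan ▸ mem_degreeLT.mpr hp)
  rintro _ ⟨i, hi, rfl⟩
  simp only [SetLike.mem_coe, LinearMap.mem_ker, LinearMap.comp_apply, LinearMap.mulRight_apply]
  exact (hK.polyIntegral_mul i j).trans (if_neg (Set.mem_Iio.mp hi).ne)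

theorem polyIntegral_derivative_mul (hK : IsLegendreBasis t₀ t₁ K) (i j : ℕ) :
    polyIntegral t₀ t₁ (derivative (K i) * K j) = derivPairing i j := by
  have hdeg (n : ℕ) : (derivative (K n)).degree < n :=
    (degree_derivative_lt (hK.ne_zero n)).trans_eq (hK.degree_eq n)
  unfold derivPairing
  split_ifs with hji
  · have h := polyIntegral_derivative t₀ t₁ (K i * K j)
    rw [derivative_mul, map_add, mul_comm (K i),
      hK.polyIntegral_mul_eq_zero_of_degree_lt ((hdeg j).trans (by exact_mod_cast hji)),
      add_zero] at h
    rw [h, eval_mul, eval_mul, hK.eval_right, hK.eval_right, hK.eval_left, hK.eval_left, pow_add]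
    ring
  · exact hK.polyIntegral_mul_eq_zero_of_degree_lt
      ((hdeg i).trans_le (by exact_mod_cast not_lt.mp hji))

theorem eval_right_sum (hK : IsLegendreBasis t₀ t₁ K) (c : ℕ → ℝ) (s : Finset ℕ) :
    (∑ i ∈ s, C (c i) * K i).eval t₁ = ∑ i ∈ s, c i := by
  simp [eval_finsetSum, hK.eval_right]

theorem eval_left_sum (hK : IsLegendreBasis t₀ t₁ K) (c : ℕ → ℝ) (s : Finset ℕ) :
    (∑ i ∈ s, C (c i) * K i).eval t₀ = ∑ i ∈ s, (-1) ^ i * c i := by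
  simp [eval_finsetSum, hK.eval_left, mul_comm]

theorem polyIntegral_sum_mul (hK : IsLegendreBasis t₀ t₁ K) (c : ℕ → ℝ) {r j : ℕ} (hj : j ≤ r) :
    polyIntegral t₀ t₁ ((∑ i ∈ range (r + 1), C (c i) * K i) * K j) =
      c j * ((t₁ - t₀) / (2 * j + 1)) := by
  simp [sum_mul, mul_assoc, polyIntegral_C_mul, hK.polyIntegral_mul, Nat.lt_succ_iff.mpr hj]

theorem polyIntegral_derivative_sum_mul (hK : IsLegendreBasis t₀ t₁ K) (c : ℕ → ℝ) (r j : ℕ) :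
    polyIntegral t₀ t₁ (derivative (∑ i ∈ range (r + 1), C (c i) * K i) * K j) =
      ∑ i ∈ range (r + 1), c i * derivPairing i j := by
  simp only [derivative_C_mul, sum_mul, map_sum, mul_assoc, polyIntegral_C_mul,
    hK.polyIntegral_derivative_mul]

theorem polyIntegral_Lop_mul (hK : IsLegendreBasis t₀ t₁ K) (ht : t₁ ≠ t₀) (z : ℝ) {r j : ℕ}
    (hj : j ≤ r) : polyIntegral t₀ t₁ (Lop t₀ t₁ r K z * K j) = z * (-1) ^ j := by
  have : t₁ - t₀ ≠ 0 := sub_ne_zero.mpr ht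
  rw [Lop, mul_assoc, polyIntegral_C_mul, hK.polyIntegral_sum_mul _ hj]
  field_simp

theorem polyIntegral_LopE_mul (hK : IsLegendreBasis t₀ t₁ K) (ht : t₁ ≠ t₀) (z : ℝ) {r j : ℕ}
    (hj : j ≤ r) : polyIntegral t₀ t₁ (LopE t₀ t₁ r K z * K j) = z := by
  have : t₁ - t₀ ≠ 0 := sub_ne_zero.mpr ht
  rw [LopE, mul_assoc, polyIntegral_C_mul, hK.polyIntegral_sum_mul _ hj]
  field_simp

theorem dualSystem (hK : IsLegendreBasis t₀ t₁ K) (ht : t₁ ≠ t₀) {r : ℕ} {lam : ℝ} {φ : ℝ[X]}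
    {a : ℕ → ℝ}
    (hφ : derivative φ - C lam * φ - LopE t₀ t₁ r K (φ.eval t₁) = Lop t₀ t₁ r K 1)
    (hrep : φ = ∑ i ∈ range (r + 1), C (a i) * K i) :
    DualSystem ((t₁ - t₀) * lam) r a := by
  intro j hj
  have h := congrArg (fun p ↦ polyIntegral t₀ t₁ (p * K j)) hφ
  simp only [sub_mul, map_sub, mul_assoc, polyIntegral_C_mul] at h
  rw [hK.polyIntegral_LopE_mul ht _ hj, hK.polyIntegral_Lop_mul ht _ hj, hrep,
    hK.polyIntegral_derivative_sum_mul, hK.polyIntegral_sum_mul _ hj,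
    hK.eval_right_sum] at h
  linear_combination h

end IsLegendreBasis

theorem sum_range_ite_lt {M : Type*} [AddCommGroup M] (f : ℕ → M) {j r : ℕ} (h : j ≤ r) :
    ∑ i ∈ range (r + 1), (if j < i then f i else 0) =
      ∑ i ∈ range (r + 1), f i - ∑ i ∈ range (j + 1), f i := by
  rw [sum_ite, sum_const_zero, add_zero, ← sum_range_add_sum_Ico f (by omega : j + 1 ≤ r + 1),
    add_sub_cancel_left]
  congr 1
  ext i
  simp only [mem_filter, mem_range, mem_Ico]
  omega

noncomputable def dualRatio (c : ℝ) : ℕ → ℝ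
  | 0 => 1
  | 1 => 1 + 2 / c
  | n + 2 => dualRatio c n + 2 * (2 * n + 3) / c * dualRatio c (n + 1)

theorem dualRatio_pos {c : ℝ} (hc : 0 < c) (n : ℕ) : 0 < dualRatio c n := by
  induction n using Nat.twoStepInduction with
  | zero => exact one_pos
  | one => exact add_pos one_pos (div_pos two_pos hc)
  | more n h₀ h₁ => unfold dualRatio; positivity

namespace DualSystem

variable {c : ℝ} {r : ℕ} {a : ℕ → ℝ}

theorem mul_coeff_zero (hs : DualSystem c r a) :
    c * a 0 = -(1 + ∑ i ∈ range (r + 1), (-1) ^ i * a i) := by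
  have h := hs 0 (Nat.zero_le r)
  simp only [derivPairing_zero_right, mul_sub, mul_one, sum_sub_distrib,
    mul_comm (a _) ((-1 : ℝ) ^ _)] at h
  norm_num at h
  linarith

theorem mul_div_add_div_succ (hs : DualSystem c r a) {j : ℕ} (hj : j < r) :
    c * (a j / (2 * j + 1) + a (j + 1) / (2 * j + 3)) = -2 * ∑ i ∈ range (j + 1), a i := by
  have hT : ∑ i ∈ range (r + 1), a i * derivPairing i j +
      ∑ i ∈ range (r + 1), a i * derivPairing i (j + 1) =
      2 * (∑ i ∈ range (r + 1), a i - ∑ i ∈ range (j + 1), a i) := by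
    simp only [← sum_add_distrib, ← mul_add, derivPairing_add_derivPairing_succ, mul_ite, mul_zero]
    rw [sum_range_ite_lt _ hj.le, ← sum_mul, ← sum_mul]
    ring
  have h₀ := hs j hj.le
  have h₁ := hs (j + 1) hj
  push_cast [pow_succ] at h₁
  linear_combination hT - h₀ - h₁

theorem mul_div_last_add_sum (hs : DualSystem c r a) :
    c * (a r / (2 * r + 1)) + ∑ i ∈ range (r + 1), a i = -(-1) ^ r := by
  have h := hs r le_rfl
  rw [sum_eq_zero fun i hi ↦ by rw [derivPairing_of_le (by simpa [Nat.lt_succ_iff] using hi),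
    mul_zero]] at h
  linarith

theorem coeff_one (hs : DualSystem c r a) (hc : c ≠ 0) (hr : 1 ≤ r) :
    a 1 = -3 * (2 + c) / c * a 0 := by
  have h := hs.mul_div_add_div_succ hr
  norm_num at h
  field_simp
  linear_combination 3 * h

theorem div_add_two_eq (hs : DualSystem c r a) (hc : c ≠ 0) {j : ℕ} (hj : j + 2 ≤ r) :
    a (j + 2) / (2 * (j + 2 : ℕ) + 1) = a j / (2 * j + 1) - 2 * a (j + 1) / c := by
  have h₀ := hs.mul_div_add_div_succ (j := j) (by omega)
  have h₁ := hs.mul_div_add_div_succ (j := j + 1) (by omega)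
  rw [sum_range_succ] at h₁
  have h : c * (a (j + 2) / (2 * (j + 2 : ℕ) + 1)) = c * (a j / (2 * j + 1)) - 2 * a (j + 1) := by
    push_cast at h₁ ⊢
    linear_combination h₁ - h₀
  rw [← mul_right_inj' hc, h, mul_sub, mul_div_cancel₀ _ hc]

theorem coeff_eq_of_two_le (hs : DualSystem c r a) (hc : c ≠ 0) {i : ℕ} (h2 : 2 ≤ i) (hi : i ≤ r) :
    a i = (2 * i + 1) * (a (i - 2) / (2 * i - 3) - 2 * a (i - 1) / c) := by
  obtain ⟨j, rfl⟩ := Nat.exists_eq_add_of_le' h2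
  have h := hs.div_add_two_eq hc hi
  rw [Nat.add_sub_cancel, show j + 2 - 1 = j + 1 by omega]
  push_cast at h ⊢
  rw [show 2 * ((j : ℝ) + 2) - 3 = 2 * j + 1 by ring, ← h]
  field_simp

theorem signed_div_eq_dualRatio (hs : DualSystem c r a) (hc : c ≠ 0) {i : ℕ} (hi : i ≤ r) :
    (-1) ^ (i + 1) * (a i / (2 * i + 1)) = -a 0 * dualRatio c i := by
  induction i using Nat.twoStepInduction with
  | zero => simp [dualRatio]
  | one =>
    rw [hs.coeff_one hc hi, dualRatio]
    field_simp
    ring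
  | more n h₀ h₁ =>
    have h₁' := h₁ (by omega)
    field_simp at h₁'
    rw [hs.div_add_two_eq hc hi, dualRatio]
    push_cast at h₁' ⊢
    linear_combination h₀ (by omega) + 2 / c * h₁'

theorem neg_coeff_zero_mul_dualRatio (hs : DualSystem c r a) (hc : c ≠ 0) :
    -a 0 * (c / 2 * (dualRatio c r + dualRatio c (r + 1))) = 1 := by
  have hlast := hs.mul_div_last_add_sum
  cases r with
  | zero =>
    simp only [dualRatio]
    norm_num at hlast
    field_simp
    linear_combination -2 * hlast
  | succ m =>
    have h₀ := hs.signed_div_eq_dualRatio hc (i := m) (by omega)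
    have h₁ := hs.signed_div_eq_dualRatio hc (i := m + 1) le_rfl
    have hF := hs.mul_div_add_div_succ (j := m) (by omega)
    have ha : a (m + 1) = (2 * m + 3) * (a (m + 1) / (2 * (m + 1 : ℕ) + 1)) := by
      push_cast; field_simp; ring
    have hcancel : c / 2 * (2 * (2 * m + 3) / c) = 2 * m + 3 := by field_simp
    have hss : ((-1 : ℝ) ^ m) ^ 2 = 1 := by rw [← pow_mul, mul_comm, pow_mul]; norm_num
    rw [sum_range_succ] at hlast
    rw [dualRatio]
    push_cast at *
    -- the last equation, with `a_0 + ⋯ + a_m` eliminated through `hF`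
    linear_combination -(c / 2 + 2 * m + 3) * h₁ - c / 2 * h₀ - (-1) ^ m / 2 * hF
      + (-1) ^ m * hlast - (-1) ^ m * ha + hss - a 0 * dualRatio c (m + 1) * hcancel

theorem neg_coeff_zero_pos (hs : DualSystem c r a) (hc : 0 < c) : 0 < -a 0 := by
  have h := hs.neg_coeff_zero_mul_dualRatio hc.ne'
  exact (pos_iff_pos_of_mul_pos (h ▸ one_pos)).mpr
    (by have := dualRatio_pos hc r; have := dualRatio_pos hc (r + 1); positivity)

theorem signed_coeff_pos (hs : DualSystem c r a) (hc : 0 < c) {i : ℕ} (hi : i ≤ r) :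
    0 < (-1) ^ (i + 1) * a i := by
  have h := hs.signed_div_eq_dualRatio hc.ne' hi
  have hpos : 0 < (-1) ^ (i + 1) * (a i / (2 * i + 1)) :=
    h ▸ mul_pos (hs.neg_coeff_zero_pos hc) (dualRatio_pos hc i)
  rw [mul_div_assoc'] at hpos
  exact (div_pos_iff_of_pos_right (by positivity)).mp hpos

end DualSystem

theorem stmt_5_general (t₀ t₁ : ℝ) (ht : t₀ < t₁) (r : ℕ) (K : ℕ → Polynomial ℝ)
    (hK : IsLegendreBasis t₀ t₁ K) (lam : ℝ) (hlam : 0 < lam)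
    (φ : Polynomial ℝ)
    (hφ : Polynomial.derivative φ - Polynomial.C lam * φ - LopE t₀ t₁ r K (φ.eval t₁)
      = Lop t₀ t₁ r K 1)
    (a : ℕ → ℝ) (hrep : φ = ∑ i ∈ Finset.range (r + 1), Polynomial.C (a i) * K i) :
    a 0 = -(1 + φ.eval t₀) / ((t₁ - t₀) * lam) ∧
    (1 ≤ r → a 1 = -(3 / lam) * (2 / (t₁ - t₀) + lam) * a 0) ∧
    (∀ i, 2 ≤ i → i ≤ r →
      a i = (2 * (i : ℝ) + 1) *
        (a (i - 2) / (2 * (i : ℝ) - 3) - 2 * a (i - 1) / ((t₁ - t₀) * lam))) ∧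
    (∀ i, i ≤ r → a i ≠ 0 ∧ 0 < (-1 : ℝ) ^ (i + 1) * a i) := by
  have hc : 0 < (t₁ - t₀) * lam := mul_pos (sub_pos.mpr ht) hlam
  have hs := hK.dualSystem ht.ne' hφ hrep
  refine ⟨?_, fun hr ↦ ?_, fun i h2 hi ↦ hs.coeff_eq_of_two_le hc.ne' h2 hi,
    fun i hi ↦ ⟨fun h0 ↦ ?_, hs.signed_coeff_pos hc hi⟩⟩
  · rw [eq_div_iff hc.ne', mul_comm, hs.mul_coeff_zero, hrep, hK.eval_left_sum]
  · have hk : t₁ - t₀ ≠ 0 := (sub_pos.mpr ht).ne'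
    rw [hs.coeff_one hc.ne' hr]
    field_simp
  · simpa [h0] using hs.signed_coeff_pos hc hi

/-- Recursion formulas and sign alternation for the rescaled Legendre coefficients of the
dG dual solution `φ = ∑_{i=0}^r a_i K_i`. -/
theorem stmt_5 (t₀ t₁ : ℝ) (ht : t₀ < t₁) (r : ℕ) (K : ℕ → Polynomial ℝ)
    (hK : IsLegendreBasis t₀ t₁ K) (lam : ℝ) (hlam : 0 < lam)
    (φ : Polynomial ℝ) (hφdeg : φ.natDegree ≤ r)
    (hφ : Polynomial.derivative φ - Polynomial.C lam * φ - LopE t₀ t₁ r K (φ.eval t₁)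
      = Lop t₀ t₁ r K 1)
    (a : ℕ → ℝ) (hrep : φ = ∑ i ∈ Finset.range (r + 1), Polynomial.C (a i) * K i) :
    a 0 = -(1 + φ.eval t₀) / ((t₁ - t₀) * lam) ∧
    (1 ≤ r → a 1 = -(3 / lam) * (2 / (t₁ - t₀) + lam) * a 0) ∧
    (∀ i, 2 ≤ i → i ≤ r →
      a i = (2 * (i : ℝ) + 1) *
        (a (i - 2) / (2 * (i : ℝ) - 3) - 2 * a (i - 1) / ((t₁ - t₀) * lam))) ∧
    (∀ i, i ≤ r → a i ≠ 0 ∧ 0 < (-1 : ℝ) ^ (i + 1) * a i) :=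
  stmt_5_general t₀ t₁ ht r K hK lam hlam φ hφ a hrep
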